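/- arXiv:2511.11439 — 2 statements merged into one kernel-verified Lean document; each statement's English description precedes it below -/
import Mathlib

section
/- Let D, r, m be positive integers and let A be a random D×r real matrix whose entries are independent Gaussian random variables with mean 0 and variance 1/D. Then for all fixed matrices U, V ∈ ℝ^{r×m}, Var(⟨AU, AV⟩_F) = ( ‖V Uᵀ‖_F² + tr((V Uᵀ)²) ) / D, and consequently Var(⟨AU, AV⟩_F) ≤ 2 ‖U‖_F² ‖V‖_F² / D. -/
open MeasureTheory ProbabilityTheory Matrix
open scoped NNReal

instance matrixMeasurableSpace {m n α : Type*} [MeasurableSpace α] :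
    MeasurableSpace (Matrix m n α) :=
  inferInstanceAs (MeasurableSpace (m → n → α))

/-- The product Gaussian measure on `D × r` real matrices whose entries are
independent Gaussians with mean `0` and variance `1/D`. -/
noncomputable def gaussianMatrix (D r : ℕ) : Measure (Matrix (Fin D) (Fin r) ℝ) :=
  Measure.pi fun _ : Fin D => Measure.pi fun _ : Fin r => gaussianReal 0 (D : ℝ≥0)⁻¹

/-- Frobenius inner product of two real matrices. -/
def frobInner {n m : Type*} [Fintype n] [Fintype m] (X Y : Matrix n m ℝ) : ℝ :=
  ∑ i, ∑ j, X i j * Y i j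

/-- Frobenius norm of a real matrix. -/
noncomputable def frobNorm {n m : Type*} [Fintype n] [Fintype m] (X : Matrix n m ℝ) : ℝ :=
  Real.sqrt (frobInner X X)

/-!
Row `i` of `A` contributes `(A i) ⬝ᵥ N *ᵥ (A i)` with `N = V Uᵀ`, so `⟨AU, AV⟩_F` is a sum of `D`
i.i.d. copies of a quadratic form `q` in a vector `x` with i.i.d. `N(0, v)` coordinates, `v = 1/D`,
and its variance is `D · Var q`. For i.i.d. centred coordinates with second moment `s` and fourth
moment `m`, the product formula for moments under a product measure gives
`E[x_k x_l x_p x_q] = s² (δ_kl δ_pq + δ_kp δ_lq + δ_kq δ_lp) + (m - 3 s²) δ_klpq`, hence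
`Var q = s² (‖N‖_F² + tr (N²)) + (m - 3 s²) ∑ N_kk²`. The Gaussian has `m = 3 v²` (read off its
moment generating function `exp (v t² / 2)`), so `D · Var q = (‖N‖_F² + tr (N²)) / D`. The bound
follows from `tr (N²) ≤ ‖N‖_F²` and the submultiplicativity of the Frobenius norm.
-/

section FrobeniusNorm

attribute [local instance] Matrix.frobeniusNormedAddCommGroup

variable {n p : Type*} [Fintype n] [Fintype p]

lemma frobInner_self_eq_norm_sq (X : Matrix n p ℝ) : frobInner X X = ‖X‖ ^ 2 := by
  rw [frobenius_norm_def, ← Real.rpow_natCast, ← Real.rpow_mul (by positivity)]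
  norm_num [frobInner, ← sq]

lemma frobNorm_eq_norm (X : Matrix n p ℝ) : frobNorm X = ‖X‖ := by
  rw [frobNorm, frobInner_self_eq_norm_sq, Real.sqrt_sq (norm_nonneg X)]

lemma frobNorm_sq (X : Matrix n p ℝ) : frobNorm X ^ 2 = frobInner X X := by
  rw [frobNorm_eq_norm, frobInner_self_eq_norm_sq]

lemma frobNorm_mul_le {q : Type*} [Fintype q] (X : Matrix n p ℝ) (Y : Matrix p q ℝ) :
    frobNorm (X * Y) ≤ frobNorm X * frobNorm Y := by
  simpa only [frobNorm_eq_norm] using frobenius_norm_mul X Y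

lemma frobNorm_transpose (X : Matrix n p ℝ) : frobNorm Xᵀ = frobNorm X := by
  simp only [frobNorm_eq_norm, frobenius_norm_transpose]

end FrobeniusNorm

lemma trace_mul_self_le_frobInner {n : Type*} [Fintype n] (N : Matrix n n ℝ) :
    (N * N).trace ≤ frobInner N N := by
  have h : ∀ k l, N k l * N l k ≤ (N k l * N k l + N l k * N l k) / 2 := fun k l => by
    nlinarith [sq_nonneg (N k l - N l k)]
  calc (N * N).trace = ∑ k, ∑ l, N k l * N l k := by simp [Matrix.trace, Matrix.mul_apply]
    _ ≤ ∑ k, ∑ l, (N k l * N k l + N l k * N l k) / 2 := by gcongr with k _ l _; exact h k l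
    _ = frobInner N N := by
      simp only [← Finset.sum_div, Finset.sum_add_distrib, frobInner]
      rw [Finset.sum_comm (f := fun k l => N l k * N l k)]
      ring

lemma frobInner_mul_mul_eq_sum {n k p : Type*} [Fintype n] [Fintype k] [Fintype p]
    (A : Matrix n k ℝ) (U V : Matrix k p ℝ) :
    frobInner (A * U) (A * V) = ∑ i, A i ⬝ᵥ (V * Uᵀ) *ᵥ A i := by
  refine Finset.sum_congr rfl fun i _ => ?_
  rw [← mulVec_mulVec, dotProduct_mulVec, mulVec_transpose, dotProduct_comm]
  rfl

section GaussianMoments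

open Polynomial in
noncomputable def expMulSqDerivPoly (c : ℝ) : ℕ → ℝ[X]
  | 0 => 1
  | n + 1 => derivative (expMulSqDerivPoly c n) + C (2 * c) * X * expMulSqDerivPoly c n

lemma iteratedDeriv_exp_mul_sq (c : ℝ) (n : ℕ) :
    iteratedDeriv n (fun t => Real.exp (c * t ^ 2)) =
      fun t => (expMulSqDerivPoly c n).eval t * Real.exp (c * t ^ 2) := by
  induction n with
  | zero => simp [expMulSqDerivPoly]
  | succ n ih =>
    ext t
    have hexp : HasDerivAt (fun t => Real.exp (c * t ^ 2))
        (2 * c * t * Real.exp (c * t ^ 2)) t := by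
      convert ((hasDerivAt_pow 2 t).const_mul c).exp using 1
      ring
    rw [iteratedDeriv_succ, ih, ((Polynomial.hasDerivAt _ t).fun_mul hexp).deriv,
      expMulSqDerivPoly]
    simp only [Polynomial.eval_add, Polynomial.eval_mul, Polynomial.eval_C, Polynomial.eval_X]
    ring

variable (v : ℝ≥0)

lemma integral_pow_gaussianReal (n : ℕ) :
    ∫ x, x ^ n ∂gaussianReal 0 v = (expMulSqDerivPoly (v / 2) n).eval 0 := by
  have h := iteratedDeriv_mgf_zero (X := fun x : ℝ => x) (μ := gaussianReal 0 v) (by simp) n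
  rw [mgf_fun_id_gaussianReal] at h
  simp only [zero_mul, zero_add, Pi.pow_apply] at h
  rw [← h]
  have hexp : (fun t : ℝ => Real.exp (v * t ^ 2 / 2)) =
      fun t => Real.exp ((v / 2 : ℝ) * t ^ 2) := by
    ext t
    ring_nf
  simp [hexp, iteratedDeriv_exp_mul_sq]

lemma integral_sq_gaussianReal : ∫ x, x ^ 2 ∂gaussianReal 0 v = v := by
  rw [integral_pow_gaussianReal]
  simp only [expMulSqDerivPoly, Polynomial.derivative_one, map_mul, mul_one, zero_add,
    Polynomial.derivative_mul, Polynomial.derivative_C, zero_mul, mul_zero, add_zero,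
    Polynomial.derivative_X, Polynomial.eval_add, Polynomial.eval_mul, Polynomial.eval_C,
    Polynomial.eval_X]
  ring

lemma integral_pow_four_gaussianReal : ∫ x, x ^ 4 ∂gaussianReal 0 v = 3 * (v : ℝ) ^ 2 := by
  rw [integral_pow_gaussianReal]
  simp only [expMulSqDerivPoly, Polynomial.derivative_one, map_mul, mul_one, zero_add,
    Polynomial.derivative_mul, Polynomial.derivative_C, zero_mul, mul_zero, add_zero,
    Polynomial.derivative_X, Polynomial.derivative_add, Polynomial.eval_add, Polynomial.eval_mul,
    Polynomial.eval_C, Polynomial.eval_X]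
  ring

end GaussianMoments

lemma integrable_pow_of_memLp_id {μ : Measure ℝ} [IsFiniteMeasure μ] {p n : ℕ}
    (hμ : MemLp id p μ) (hn : n ≤ p) : Integrable (fun t : ℝ => t ^ n) μ := by
  have h : MemLp id n μ := hμ.mono_exponent (by exact_mod_cast hn)
  refine h.integrable_norm_pow'.mono' (by fun_prop) (ae_of_all _ fun t => ?_)
  simp [norm_pow]

section IIDCoordinates

variable {ι : Type*} [Fintype ι] {μ : Measure ℝ} [IsProbabilityMeasure μ]

lemma integrable_prod_pow_eval (hμ : MemLp id 4 μ) (e : ι → ℕ) (he : ∀ j, e j ≤ 4) :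
    Integrable (fun x : ι → ℝ => ∏ j, x j ^ e j) (Measure.pi fun _ => μ) :=
  Integrable.fintype_prod fun j => integrable_pow_of_memLp_id hμ (he j)

lemma integral_prod_pow_eval (e : ι → ℕ) (S : Finset ι) (hS : ∀ j ∉ S, e j = 0) :
    ∫ x, ∏ j, x j ^ e j ∂(Measure.pi fun _ : ι => μ) = ∏ j ∈ S, ∫ t, t ^ e j ∂μ := by
  rw [integral_fintype_prod_eq_prod (f := fun j (t : ℝ) => t ^ e j)]
  refine (Finset.prod_subset (Finset.subset_univ S) fun j _ hj => ?_).symm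
  simp [hS j hj]

lemma eval_mul_eval_eq_prod_pow [DecidableEq ι] (x : ι → ℝ) (k l : ι) :
    x k * x l = ∏ j, x j ^ ((if j = k then 1 else 0) + (if j = l then 1 else 0)) := by
  simp only [pow_add, Finset.prod_mul_distrib, pow_ite, pow_one, pow_zero,
    Finset.prod_ite_eq', Finset.mem_univ, if_true]

lemma eval_mul_eval_mul_eval_mul_eval_eq_prod_pow [DecidableEq ι] (x : ι → ℝ) (k l p q : ι) :
    x k * x l * x p * x q = ∏ j, x j ^ ((if j = k then 1 else 0) + (if j = l then 1 else 0) +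
      (if j = p then 1 else 0) + (if j = q then 1 else 0)) := by
  simp only [pow_add, Finset.prod_mul_distrib, pow_ite, pow_one, pow_zero,
    Finset.prod_ite_eq', Finset.mem_univ, if_true]

lemma integrable_eval_mul_eval (hμ : MemLp id 4 μ) (k l : ι) :
    Integrable (fun x : ι → ℝ => x k * x l) (Measure.pi fun _ => μ) := by
  classical
  simp_rw [eval_mul_eval_eq_prod_pow _ k l]
  exact integrable_prod_pow_eval hμ _ fun j => by split_ifs <;> simp

lemma integrable_eval_mul_eval_mul_eval_mul_eval (hμ : MemLp id 4 μ) (k l p q : ι) :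
    Integrable (fun x : ι → ℝ => x k * x l * x p * x q) (Measure.pi fun _ => μ) := by
  classical
  simp_rw [eval_mul_eval_mul_eval_mul_eval_eq_prod_pow _ k l p q]
  exact integrable_prod_pow_eval hμ _ fun j => by split_ifs <;> simp

variable [DecidableEq ι] {s m : ℝ}

lemma integral_eval_mul_eval (h1 : ∫ t, t ∂μ = 0) (h2 : ∫ t, t ^ 2 ∂μ = s) (k l : ι) :
    ∫ x, x k * x l ∂(Measure.pi fun _ : ι => μ) = if k = l then s else 0 := by
  simp_rw [eval_mul_eval_eq_prod_pow _ k l]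
  rw [integral_prod_pow_eval _ {k, l} fun j hj => by simp_all]
  by_cases hkl : k = l
  · subst hkl
    simp [h2]
  · simp [Finset.prod_insert, hkl, Ne.symm hkl, h1]

lemma integral_eval_mul_eval_mul_eval_mul_eval (h1 : ∫ t, t ∂μ = 0) (h2 : ∫ t, t ^ 2 ∂μ = s)
    (h4 : ∫ t, t ^ 4 ∂μ = m) (k l p q : ι) :
    ∫ x, x k * x l * x p * x q ∂(Measure.pi fun _ : ι => μ) =
      s ^ 2 * ((if k = l ∧ p = q then 1 else 0) + (if k = p ∧ l = q then 1 else 0) +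
        (if k = q ∧ l = p then 1 else 0)) +
      (m - 3 * s ^ 2) * (if k = l ∧ l = p ∧ p = q then 1 else 0) := by
  simp_rw [eval_mul_eval_mul_eval_mul_eval_eq_prod_pow _ k l p q]
  rw [integral_prod_pow_eval _ {k, l, p, q} fun j hj => by simp_all]
  have h1' : ∫ t, t ^ 1 ∂μ = 0 := by simpa using h1
  -- Case on the equality pattern of `k, l, p, q`: `h1'` kills every pattern in which some index
  -- occurs exactly once; the others are the three pairings and the all-equal pattern.
  by_cases hkl : k = l <;> by_cases hkp : k = p <;> by_cases hkq : k = q <;>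
    by_cases hlp : l = p <;> by_cases hlq : l = q <;> by_cases hpq : p = q <;>
    subst_vars <;> simp_all [Finset.prod_insert, @eq_comm ι] <;> ring

end IIDCoordinates

section QuadraticForm

variable {ι : Type*} [Fintype ι] {μ : Measure ℝ} [IsProbabilityMeasure μ] {s m : ℝ}
  (N : Matrix ι ι ℝ)

lemma dotProduct_mulVec_self_eq_sum (x : ι → ℝ) :
    x ⬝ᵥ N *ᵥ x = ∑ k, ∑ l, N k l * (x k * x l) := by
  simp only [dotProduct, mulVec, Finset.mul_sum]
  exact Finset.sum_congr rfl fun k _ => Finset.sum_congr rfl fun l _ => by ring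

lemma dotProduct_mulVec_self_sq_eq_sum (x : ι → ℝ) :
    (x ⬝ᵥ N *ᵥ x) ^ 2 =
      ∑ k, ∑ l, ∑ p, ∑ q, N k l * N p q * (x k * x l * x p * x q) := by
  simp only [dotProduct_mulVec_self_eq_sum, sq, Finset.sum_mul_sum]
  refine Finset.sum_congr rfl fun k _ => ?_
  rw [Finset.sum_comm]
  exact Finset.sum_congr rfl fun l _ => Finset.sum_congr rfl fun p _ =>
    Finset.sum_congr rfl fun q _ => by ring

lemma sum_mul_isserlis_eq [DecidableEq ι] (a b : ℝ) :
    ∑ k, ∑ l, ∑ p, ∑ q, N k l * N p q *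
      (a * ((if k = l ∧ p = q then 1 else 0) + (if k = p ∧ l = q then 1 else 0) +
        (if k = q ∧ l = p then 1 else 0)) + b * (if k = l ∧ l = p ∧ p = q then 1 else 0)) =
      a * (N.trace ^ 2 + frobInner N N + (N * N).trace) + b * ∑ k, N k k ^ 2 := by
  have h₁ : ∑ k, ∑ l, ∑ p, ∑ q, N k l * N p q * (if k = l ∧ p = q then 1 else 0) =
      N.trace ^ 2 := by
    simp [ite_and, Matrix.trace, sq, Finset.sum_mul_sum]
  have h₂ : ∑ k, ∑ l, ∑ p, ∑ q, N k l * N p q * (if k = p ∧ l = q then 1 else 0) =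
      frobInner N N := by
    simp [ite_and, frobInner]
  have h₃ : ∑ k, ∑ l, ∑ p, ∑ q, N k l * N p q * (if k = q ∧ l = p then 1 else 0) =
      (N * N).trace := by
    simp [ite_and, Matrix.trace, Matrix.mul_apply]
  have h₄ : ∑ k, ∑ l, ∑ p, ∑ q, N k l * N p q * (if k = l ∧ l = p ∧ p = q then 1 else 0) =
      ∑ k, N k k ^ 2 := by
    simp [ite_and, sq]
  simp only [mul_add, Finset.sum_add_distrib, mul_left_comm _ a, mul_left_comm _ b,
    ← Finset.mul_sum, h₁, h₂, h₃, h₄]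

lemma integrable_dotProduct_mulVec_self_sq (hμ : MemLp id 4 μ) :
    Integrable (fun x : ι → ℝ => (x ⬝ᵥ N *ᵥ x) ^ 2) (Measure.pi fun _ => μ) := by
  simp_rw [dotProduct_mulVec_self_sq_eq_sum]
  refine integrable_finsetSum _ fun k _ => integrable_finsetSum _ fun l _ =>
    integrable_finsetSum _ fun p _ => integrable_finsetSum _ fun q _ => ?_
  exact (integrable_eval_mul_eval_mul_eval_mul_eval hμ k l p q).const_mul _

lemma memLp_dotProduct_mulVec_self (hμ : MemLp id 4 μ) :
    MemLp (fun x : ι → ℝ => x ⬝ᵥ N *ᵥ x) 2 (Measure.pi fun _ => μ) :=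
  (memLp_two_iff_integrable_sq (by fun_prop)).mpr (integrable_dotProduct_mulVec_self_sq N hμ)

lemma integral_dotProduct_mulVec_self (hμ : MemLp id 4 μ) (h1 : ∫ t, t ∂μ = 0)
    (h2 : ∫ t, t ^ 2 ∂μ = s) :
    ∫ x, x ⬝ᵥ N *ᵥ x ∂(Measure.pi fun _ : ι => μ) = s * N.trace := by
  classical
  have hint : ∀ k l, Integrable (fun x : ι → ℝ => N k l * (x k * x l)) (Measure.pi fun _ => μ) :=
    fun k l => (integrable_eval_mul_eval hμ k l).const_mul _
  simp_rw [dotProduct_mulVec_self_eq_sum]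
  rw [integral_finsetSum _ fun k _ => integrable_finsetSum _ fun l _ => hint k l]
  simp_rw [integral_finsetSum _ fun l _ => hint _ l, integral_const_mul,
    integral_eval_mul_eval h1 h2]
  simp [Matrix.trace, Finset.mul_sum, mul_comm]

lemma integral_dotProduct_mulVec_self_sq (hμ : MemLp id 4 μ) (h1 : ∫ t, t ∂μ = 0)
    (h2 : ∫ t, t ^ 2 ∂μ = s) (h4 : ∫ t, t ^ 4 ∂μ = m) :
    ∫ x, (x ⬝ᵥ N *ᵥ x) ^ 2 ∂(Measure.pi fun _ : ι => μ) =
      s ^ 2 * (N.trace ^ 2 + frobInner N N + (N * N).trace) +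
        (m - 3 * s ^ 2) * ∑ k, N k k ^ 2 := by
  classical
  have hint : ∀ k l p q, Integrable (fun x : ι → ℝ => N k l * N p q * (x k * x l * x p * x q))
      (Measure.pi fun _ => μ) :=
    fun k l p q => (integrable_eval_mul_eval_mul_eval_mul_eval hμ k l p q).const_mul _
  simp_rw [dotProduct_mulVec_self_sq_eq_sum]
  rw [integral_finsetSum _ fun k _ => integrable_finsetSum _ fun l _ =>
    integrable_finsetSum _ fun p _ => integrable_finsetSum _ fun q _ => hint k l p q]
  simp_rw [integral_finsetSum _ fun l _ => integrable_finsetSum _ fun p _ =>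
      integrable_finsetSum _ fun q _ => hint _ l p q,
    integral_finsetSum _ fun p _ => integrable_finsetSum _ fun q _ => hint _ _ p q,
    integral_finsetSum _ fun q _ => hint _ _ _ q, integral_const_mul,
    integral_eval_mul_eval_mul_eval_mul_eval h1 h2 h4]
  exact sum_mul_isserlis_eq N _ _

lemma variance_dotProduct_mulVec_self (hμ : MemLp id 4 μ) (h1 : ∫ t, t ∂μ = 0)
    (h2 : ∫ t, t ^ 2 ∂μ = s) (h4 : ∫ t, t ^ 4 ∂μ = m) :
    Var[fun x => x ⬝ᵥ N *ᵥ x; Measure.pi fun _ : ι => μ] =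
      s ^ 2 * (frobInner N N + (N * N).trace) + (m - 3 * s ^ 2) * ∑ k, N k k ^ 2 := by
  rw [variance_eq_sub (memLp_dotProduct_mulVec_self N hμ)]
  simp only [Pi.pow_apply]
  rw [integral_dotProduct_mulVec_self_sq N hμ h1 h2 h4, integral_dotProduct_mulVec_self N hμ h1 h2]
  ring

lemma variance_dotProduct_mulVec_self_gaussianReal (v : ℝ≥0) :
    Var[fun x => x ⬝ᵥ N *ᵥ x; Measure.pi fun _ : ι => gaussianReal 0 v] =
      (v : ℝ) ^ 2 * (frobInner N N + (N * N).trace) := by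
  rw [variance_dotProduct_mulVec_self N (memLp_id_gaussianReal' 4 ENNReal.ofNat_ne_top)
    integral_id_gaussianReal (integral_sq_gaussianReal v) (integral_pow_four_gaussianReal v)]
  ring

end QuadraticForm

lemma variance_sum_comp_eval_pi {ι E : Type*} [Fintype ι] [MeasurableSpace E] {ν : Measure E}
    [IsProbabilityMeasure ν] {g : E → ℝ} (hg : MemLp g 2 ν) :
    Var[fun x => ∑ i, g (x i); Measure.pi fun _ : ι => ν] = Fintype.card ι * Var[g; ν] := by
  have hpres (i : ι) := measurePreserving_eval (fun _ : ι => ν) i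
  have hindep : iIndepFun (fun i (x : ι → E) => g (x i)) (Measure.pi fun _ => ν) :=
    iIndepFun_pi fun _ => hg.aestronglyMeasurable.aemeasurable
  have hsum := IndepFun.variance_sum (s := Finset.univ)
    (fun i _ => hg.comp_measurePreserving (hpres i)) fun i _ j _ hij => hindep.indepFun hij
  calc Var[fun x => ∑ i, g (x i); Measure.pi fun _ : ι => ν]
      = ∑ i, Var[fun x => g (x i); Measure.pi fun _ : ι => ν] := by
        simpa only [Finset.sum_fn, Function.comp_def, Function.eval] using hsum
    _ = ∑ _ : ι, Var[g; ν] := Finset.sum_congr rfl fun i _ =>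
        (hpres i).variance_fun_comp hg.aestronglyMeasurable.aemeasurable
    _ = Fintype.card ι * Var[g; ν] := by simp

lemma frobNorm_mul_transpose_sq_add_trace_le {n p : Type*} [Fintype n] [Fintype p]
    (U V : Matrix n p ℝ) :
    frobNorm (V * Uᵀ) ^ 2 + ((V * Uᵀ) * (V * Uᵀ)).trace ≤ 2 * frobNorm U ^ 2 * frobNorm V ^ 2 := by
  have hmul : frobNorm (V * Uᵀ) ≤ frobNorm V * frobNorm U := by
    simpa only [frobNorm_transpose] using frobNorm_mul_le V Uᵀ
  have htrace := trace_mul_self_le_frobInner (V * Uᵀ)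
  rw [← frobNorm_sq] at htrace
  calc _ ≤ 2 * frobNorm (V * Uᵀ) ^ 2 := by linarith
    _ ≤ 2 * (frobNorm V * frobNorm U) ^ 2 := by
        gcongr
        exact Real.sqrt_nonneg _
    _ = 2 * frobNorm U ^ 2 * frobNorm V ^ 2 := by ring

lemma variance_frobInner_mul_mul_gaussianMatrix (D : ℕ) {r m : ℕ}
    (U V : Matrix (Fin r) (Fin m) ℝ) :
    variance (fun A => frobInner (A * U) (A * V)) (gaussianMatrix D r) =
      (frobNorm (V * Uᵀ) ^ 2 + ((V * Uᵀ) * (V * Uᵀ)).trace) / D := by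
  set N := V * Uᵀ
  set ν := Measure.pi fun _ : Fin r => gaussianReal 0 (D : ℝ≥0)⁻¹
  have hrow : MemLp (fun x => x ⬝ᵥ N *ᵥ x) 2 ν :=
    memLp_dotProduct_mulVec_self N (memLp_id_gaussianReal' 4 ENNReal.ofNat_ne_top)
  calc _ = Var[fun x : Fin D → Fin r → ℝ => ∑ i, x i ⬝ᵥ N *ᵥ x i; Measure.pi fun _ => ν] := by
        simp_rw [frobInner_mul_mul_eq_sum]
        rfl
    _ = (frobNorm N ^ 2 + (N * N).trace) / D := by
        rw [variance_sum_comp_eval_pi hrow, variance_dotProduct_mulVec_self_gaussianReal,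
          Fintype.card_fin, frobNorm_sq]
        push_cast
        field_simp

theorem stmt7_general (D r m : ℕ)
    (U V : Matrix (Fin r) (Fin m) ℝ) :
    variance (fun A => frobInner (A * U) (A * V)) (gaussianMatrix D r) =
      (frobNorm (V * Uᵀ) ^ 2 + ((V * Uᵀ) * (V * Uᵀ)).trace) / D ∧
    variance (fun A => frobInner (A * U) (A * V)) (gaussianMatrix D r) ≤
      2 * frobNorm U ^ 2 * frobNorm V ^ 2 / D := by
  rw [variance_frobInner_mul_mul_gaussianMatrix]
  exact ⟨rfl, div_le_div_of_nonneg_right (frobNorm_mul_transpose_sq_add_trace_le U V)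
    (Nat.cast_nonneg D)⟩

/-- For a Gaussian random `D × r` matrix `A` and fixed `U, V ∈ ℝ^{r×m}`,
`Var(⟨AU, AV⟩_F) = (‖V Uᵀ‖_F² + tr((V Uᵀ)²)) / D ≤ 2 ‖U‖_F² ‖V‖_F² / D`. -/
theorem stmt7 (D r m : ℕ) (hD : 0 < D) (hr : 0 < r) (hm : 0 < m)
    (U V : Matrix (Fin r) (Fin m) ℝ) :
    variance (fun A => frobInner (A * U) (A * V)) (gaussianMatrix D r) =
      (frobNorm (V * Uᵀ) ^ 2 + ((V * Uᵀ) * (V * Uᵀ)).trace) / D ∧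
    variance (fun A => frobInner (A * U) (A * V)) (gaussianMatrix D r) ≤
      2 * frobNorm U ^ 2 * frobNorm V ^ 2 / D :=
  stmt7_general D r m U V
end

section
/- Let L be a finite index set, and for each ℓ ∈ L let g_ℓ and w_ℓ be elements of a real inner product space E_ℓ and let c_ℓ ≥ 0 satisfy ⟨g_ℓ, w_ℓ⟩ ≤ c_ℓ ‖g_ℓ‖ ‖w_ℓ‖. Suppose Σ_{ℓ} ‖w_ℓ‖² > 0 and define the normalized energy weights α_ℓ = ‖w_ℓ‖² / Σ_{j} ‖w_j‖², so α_ℓ ≥ 0 and Σ_ℓ α_ℓ = 1. Then Σ_{ℓ} ⟨g_ℓ, w_ℓ⟩ ≤ √( Σ_{ℓ} α_ℓ c_ℓ² ) · √( Σ_{ℓ} ‖g_ℓ‖² ) · √( Σ_{ℓ} ‖w_ℓ‖² ). -/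
open scoped RealInnerProductSpace

/-- Layer-wise Cauchy–Schwarz with normalized energy weights: if each layer satisfies
`⟨g_ℓ, w_ℓ⟩ ≤ c_ℓ ‖g_ℓ‖ ‖w_ℓ‖` and `α_ℓ = ‖w_ℓ‖² / Σ_j ‖w_j‖²` are the normalized layer
energy weights, then the model-level inner product is bounded by
`√(Σ_ℓ α_ℓ c_ℓ²) · √(Σ_ℓ ‖g_ℓ‖²) · √(Σ_ℓ ‖w_ℓ‖²)`. -/
theorem stmt18 {L : Type*} [Fintype L] (E : L → Type*)
    [∀ ℓ, NormedAddCommGroup (E ℓ)] [∀ ℓ, InnerProductSpace ℝ (E ℓ)]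
    (g w : ∀ ℓ, E ℓ) (c : L → ℝ) (hc : ∀ ℓ, 0 ≤ c ℓ)
    (hcs : ∀ ℓ, ⟪g ℓ, w ℓ⟫ ≤ c ℓ * ‖g ℓ‖ * ‖w ℓ‖)
    (hw : 0 < ∑ ℓ, ‖w ℓ‖ ^ 2) :
    ∑ ℓ, ⟪g ℓ, w ℓ⟫ ≤
      Real.sqrt (∑ ℓ, (‖w ℓ‖ ^ 2 / ∑ j, ‖w j‖ ^ 2) * c ℓ ^ 2) *
        Real.sqrt (∑ ℓ, ‖g ℓ‖ ^ 2) * Real.sqrt (∑ ℓ, ‖w ℓ‖ ^ 2) := by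
  set S := ∑ ℓ, ‖w ℓ‖ ^ 2 with hS
  have h1 : ∑ ℓ, ⟪g ℓ, w ℓ⟫ ≤ ∑ ℓ, (c ℓ * ‖w ℓ‖) * ‖g ℓ‖ := by
    apply Finset.sum_le_sum
    intro ℓ _
    have := hcs ℓ; nlinarith [norm_nonneg (g ℓ), norm_nonneg (w ℓ)]
  have h2 : (∑ ℓ, (c ℓ * ‖w ℓ‖) * ‖g ℓ‖) ^ 2 ≤
      (∑ ℓ, (c ℓ * ‖w ℓ‖) ^ 2) * ∑ ℓ, ‖g ℓ‖ ^ 2 :=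
    Finset.sum_mul_sq_le_sq_mul_sq _ _ _
  have hnonneg : 0 ≤ ∑ ℓ, (c ℓ * ‖w ℓ‖) * ‖g ℓ‖ :=
    Finset.sum_nonneg fun ℓ _ => by
      have := hc ℓ; positivity
  have h3 : ∑ ℓ, (c ℓ * ‖w ℓ‖) * ‖g ℓ‖ ≤
      Real.sqrt (∑ ℓ, (c ℓ * ‖w ℓ‖) ^ 2) * Real.sqrt (∑ ℓ, ‖g ℓ‖ ^ 2) := by
    rw [← Real.sqrt_mul (by positivity)]
    calc ∑ ℓ, (c ℓ * ‖w ℓ‖) * ‖g ℓ‖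
        = Real.sqrt ((∑ ℓ, (c ℓ * ‖w ℓ‖) * ‖g ℓ‖) ^ 2) := by
          rw [Real.sqrt_sq hnonneg]
      _ ≤ _ := Real.sqrt_le_sqrt h2
  have key : Real.sqrt (∑ ℓ, (c ℓ * ‖w ℓ‖) ^ 2) =
      Real.sqrt (∑ ℓ, (‖w ℓ‖ ^ 2 / S) * c ℓ ^ 2) * Real.sqrt S := by
    rw [← Real.sqrt_mul (by positivity)]
    congr 1
    rw [Finset.sum_mul]
    apply Finset.sum_congr rfl
    intro ℓ _
    field_simp
  calc ∑ ℓ, ⟪g ℓ, w ℓ⟫ ≤ ∑ ℓ, (c ℓ * ‖w ℓ‖) * ‖g ℓ‖ := h1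
    _ ≤ Real.sqrt (∑ ℓ, (c ℓ * ‖w ℓ‖) ^ 2) * Real.sqrt (∑ ℓ, ‖g ℓ‖ ^ 2) := h3
    _ = _ := by rw [key]; ring
end
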